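/- arXiv:1712.05732 — 2 statements merged into one kernel-verified Lean document; each statement's English description precedes it below -/
import Mathlib

section
/- Let 0<r<1. There exists a constant C = C(r) > 0 such that for every a ∈ D, every z ∈ ∆(a,r), and every w in the closed unit disk D̄, one has (|a|/C)·ρ(z,w) ≤ |1 − (1−āz)/(1−āw)| ≤ C·|a|·ρ(z,w). -/
open MeasureTheory Filter Complex Set Metric
open scoped ENNReal

noncomputable section

/-- The open unit disk in `ℂ`. -/
def unitDisk : Set ℂ := Metric.ball 0 1

/-- Radial limit of `f` at a boundary point `ξ` (junk value if the limit does not exist). -/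
def radialLimit (f : ℂ → ℂ) (ξ : ℂ) : ℂ :=
  limUnder (nhdsWithin (1 : ℝ) (Set.Iio 1)) fun r : ℝ => f ((r : ℂ) * ξ)

/-- Extension of `f` from the open disk by radial limits. -/
def cExt (f : ℂ → ℂ) : ℂ → ℂ := fun z => if ‖z‖ < 1 then f z else radialLimit f z

/-- The normalized Lebesgue measure `m = dθ/2π` on the unit circle, as a measure on `ℂ`. -/
def circleMeasure : Measure ℂ :=
  Measure.map (fun θ : ℝ => Complex.exp (θ * Complex.I))
    ((ENNReal.ofReal (2 * Real.pi))⁻¹ • volume.restrict (Set.Ioc 0 (2 * Real.pi)))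

/-- `hardyNormP p f = ‖f‖_{H^p}^p = sup_{0<r<1} ∫_{∂D} |f(rξ)|^p dm(ξ)`. -/
def hardyNormP (p : ℝ) (f : ℂ → ℂ) : ℝ≥0∞ :=
  ⨆ r : Set.Ioo (0 : ℝ) 1,
    ∫⁻ ξ, ENNReal.ofReal (‖f (((r : ℝ) : ℂ) * ξ)‖ ^ p) ∂circleMeasure

/-- `‖f‖_{H^p}` as a real number. -/
def hardyNormR (p : ℝ) (f : ℂ → ℂ) : ℝ := (hardyNormP p f ^ (1 / p)).toReal

/-- Membership in the Hardy space `H^p`. -/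
def MemHardy (p : ℝ) (f : ℂ → ℂ) : Prop :=
  DifferentiableOn ℂ f unitDisk ∧ hardyNormP p f < ⊤

/-- Analytic self-map of the unit disk. -/
def SelfMapD (φ : ℂ → ℂ) : Prop :=
  DifferentiableOn ℂ φ unitDisk ∧ Set.MapsTo φ unitDisk unitDisk

/-- `lqNormQ q g = ‖g‖_{L^q(∂D,m)}^q`. -/
def lqNormQ (q : ℝ) (g : ℂ → ℂ) : ℝ≥0∞ :=
  ∫⁻ ξ, ENNReal.ofReal (‖g ξ‖ ^ q) ∂circleMeasure

/-- The pseudohyperbolic distance `ρ(z,w) = |z-w|/|1- w̄ z|`. -/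
def pseudoDist (z w : ℂ) : ℝ := ‖(z - w) / (1 - (starRingEnd ℂ) w * z)‖

/-- The pseudohyperbolic disk `∆(a,r) = {z ∈ D : ρ(a,z) < r}`. -/
def pDisk (a : ℂ) (r : ℝ) : Set ℂ := {z | z ∈ unitDisk ∧ pseudoDist a z < r}

/-- `σ(ξ) = ρ(φ(ξ), ψ(ξ))`, defined on `∂D` via radial limits. -/
def sigmaFun (φ ψ : ℂ → ℂ) (ξ : ℂ) : ℝ :=
  pseudoDist (radialLimit φ ξ) (radialLimit ψ ξ)

/-- Boundary function of the weighted composition operator: `(u C_φ f)(ξ) = u(ξ) f(φ(ξ))`. -/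
def wcomp (u φ f : ℂ → ℂ) : ℂ → ℂ := fun ξ => u ξ * cExt f (radialLimit φ ξ)

/-- `wcompNormQ p q u φ = ‖u C_φ‖_{H^p → L^q(∂D)}^q` (`∞` if unbounded). -/
def wcompNormQ (p q : ℝ) (u φ : ℂ → ℂ) : ℝ≥0∞ :=
  ⨆ f : {f : ℂ → ℂ // MemHardy p f ∧ hardyNormP p f ≤ 1}, lqNormQ q (wcomp u φ f.1)

/-- `diffNormQ p q φ ψ = ‖C_φ - C_ψ‖_{H^p → H^q}^q` (`∞` if unbounded). -/
def diffNormQ (p q : ℝ) (φ ψ : ℂ → ℂ) : ℝ≥0∞ :=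
  ⨆ f : {f : ℂ → ℂ // MemHardy p f ∧ hardyNormP p f ≤ 1},
    hardyNormP q fun z => f.1 (φ z) - f.1 (ψ z)

/-- The reproducing-kernel type test functions `k_a(z) = ((1-|a|²)/(1-āz)²)^{1/p}`. -/
def kFun (p : ℝ) (a z : ℂ) : ℂ :=
  (((1 - ‖a‖ ^ 2 : ℝ) : ℂ) / (1 - (starRingEnd ℂ) a * z) ^ 2) ^ ((1 : ℂ) / (p : ℂ))

/-- The filter of `a ∈ D` with `|a| → 1⁻`. -/
def bdryFilter : Filter ℂ := Filter.comap (fun a : ℂ => ‖a‖) (nhdsWithin 1 (Set.Iio 1))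

/-- The measure `μ_{u,φ}(E) = ∫_{φ^{-1}(E) ∩ ∂D} |u|^q dm`. -/
def pullMeasure (q : ℝ) (u φ : ℂ → ℂ) : Measure ℂ :=
  Measure.map (radialLimit φ)
    (circleMeasure.withDensity fun ξ => ENNReal.ofReal (‖u ξ‖ ^ q))

/-- The Carleson box `S(a)`. -/
def carlesonBox (a : ℂ) : Set ℂ :=
  if ‖a‖ = 0 then unitDisk
  else {z | ‖a‖ < ‖z‖ ∧ ‖z‖ < 1 ∧
        |Complex.arg (a * (starRingEnd ℂ) z / ((‖z‖ : ℝ) : ℂ))| ≤ (1 - ‖a‖) / 2}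

/-- The `k`-th Taylor coefficient at the origin. -/
def taylorCoeff (f : ℂ → ℂ) (k : ℕ) : ℂ := iteratedDeriv k f 0 / (Nat.factorial k : ℂ)

/-- `R_n = I - S_n`, where `S_n` is the `n`-th Taylor partial sum operator. -/
def tailOp (n : ℕ) (f : ℂ → ℂ) : ℂ → ℂ :=
  fun z => f z - ∑ k ∈ Finset.range (n + 1), taylorCoeff f k * z ^ k

/-- Compact operators from `H^p` to `H^q`: linear on `H^p`, mapping `H^p` into `H^q`,
with totally bounded image of the unit ball (in the `H^q` metric). -/
def IsCompactOpHardy (p q : ℝ) (K : (ℂ → ℂ) → ℂ → ℂ) : Prop :=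
  (∀ f g, MemHardy p f → MemHardy p g → K (f + g) = K f + K g) ∧
  (∀ (c : ℂ) (f), MemHardy p f → K (c • f) = c • K f) ∧
  (∀ f, MemHardy p f → MemHardy q (K f)) ∧
  ∀ ε : ℝ, 0 < ε → ∃ G : Finset (ℂ → ℂ),
    ∀ f, MemHardy p f → hardyNormP p f ≤ 1 →
      ∃ g ∈ G, hardyNormP q (K f - g) ≤ ENNReal.ofReal (ε ^ q)

/-- `essDiffNormQ p q φ ψ = ‖C_φ - C_ψ‖_{e, H^p → H^q}^q`. -/
def essDiffNormQ (p q : ℝ) (φ ψ : ℂ → ℂ) : ℝ≥0∞ :=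
  ⨅ K : {K : (ℂ → ℂ) → ℂ → ℂ // IsCompactOpHardy p q K},
    ⨆ f : {f : ℂ → ℂ // MemHardy p f ∧ hardyNormP p f ≤ 1},
      hardyNormP q fun z => f.1 (φ z) - f.1 (ψ z) - K.1 f.1 z

/-- Compact operators from `H^p` to `L^q(∂D)`. -/
def IsCompactOpToLq (p q : ℝ) (K : (ℂ → ℂ) → ℂ → ℂ) : Prop :=
  (∀ f g, MemHardy p f → MemHardy p g → K (f + g) = K f + K g) ∧
  (∀ (c : ℂ) (f), MemHardy p f → K (c • f) = c • K f) ∧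
  (∀ f, MemHardy p f → lqNormQ q (K f) < ⊤) ∧
  ∀ ε : ℝ, 0 < ε → ∃ G : Finset (ℂ → ℂ),
    ∀ f, MemHardy p f → hardyNormP p f ≤ 1 →
      ∃ g ∈ G, lqNormQ q (K f - g) ≤ ENNReal.ofReal (ε ^ q)

/-- `essWcompNormQ p q u φ = ‖u C_φ‖_{e, H^p → L^q(∂D)}^q`. -/
def essWcompNormQ (p q : ℝ) (u φ : ℂ → ℂ) : ℝ≥0∞ :=
  ⨅ K : {K : (ℂ → ℂ) → ℂ → ℂ // IsCompactOpToLq p q K},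
    ⨆ f : {f : ℂ → ℂ // MemHardy p f ∧ hardyNormP p f ≤ 1},
      lqNormQ q (wcomp u φ f.1 - K.1 f.1)

/-- `‖(u C_φ) ∘ R_n‖_{H^p → L^q(∂D)}^q`. -/
def wcompTailNormQ (p q : ℝ) (u φ : ℂ → ℂ) (n : ℕ) : ℝ≥0∞ :=
  ⨆ f : {f : ℂ → ℂ // MemHardy p f ∧ hardyNormP p f ≤ 1},
    lqNormQ q (wcomp u φ (tailOp n f.1))

/-- The Poisson transform of a boundary function. -/
def poissonTransform (g : ℂ → ℝ) (z : ℂ) : ℝ :=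
  ∫ ξ, ((1 - ‖z‖ ^ 2) / ‖1 - (starRingEnd ℂ) z * ξ‖ ^ 2) * g ξ ∂circleMeasure


lemma aux_one_sub_abs_le (u : ℂ) : 1 - ‖u‖ ≤ ‖1 - u‖ := by
  simpa using norm_add_le (1 - u) u

lemma aux_id (a z : ℂ) : ‖1 - (starRingEnd ℂ) a * z‖^2 - ‖a - z‖^2
    = (1 - ‖a‖^2)*(1 - ‖z‖^2) := by
  rw [Complex.sq_norm, Complex.sq_norm, Complex.sq_norm, Complex.sq_norm]
  simp only [Complex.normSq_apply, Complex.sub_re, Complex.sub_im, Complex.mul_re,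
    Complex.mul_im, Complex.conj_re, Complex.conj_im, Complex.one_re, Complex.one_im]
  ring

lemma aux_alpha (aa zz A d : ℝ) (h0a : 0 ≤ aa) (h1a : aa ≤ 1) (hA1 : 1 - aa*zz ≤ A)
    (hza : zz - aa ≤ d) (hd : 0 ≤ d) : 1 - aa^2 ≤ A + d := by nlinarith

lemma aux_main (r A B E α β d : ℝ) (hr0 : 0 < r) (hr1 : r < 1)
    (hA : 0 < A) (hB : 0 < B) (hE : 0 < E) (hα : 0 < α) (hβ : 0 < β) (hd : 0 ≤ d)
    (hrho : d < r * A) (hid : A^2 - d^2 = α*β)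
    (h3a : α ≤ A + d) (h3b : β ≤ A + d)
    (hαB : α ≤ 2*B) (hβE : β ≤ 2*E)
    (hEtri : E ≤ B + d) (hBtri : B ≤ E + d) :
    (1-r)*B ≤ (1+r)*E ∧ (1-r)*E ≤ (1+r)*B := by
  have h3a' : α ≤ (1+r)*A := by linarith
  have h3b' : β ≤ (1+r)*A := by linarith
  have hd2 : d^2 ≤ (r*A)^2 := by nlinarith
  have h2 : (1 - r^2) * A^2 ≤ α * β := by nlinarith
  have h4 : (1-r)*β ≤ (1+r)*α := by
    have hb2 : β^2 ≤ ((1+r)*A)^2 := by nlinarith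
    nlinarith
  have h4' : (1-r)*α ≤ (1+r)*β := by
    have hb2 : α^2 ≤ ((1+r)*A)^2 := by nlinarith
    nlinarith
  have h5 : (1-r)*A ≤ α := by
    nlinarith [mul_le_mul_of_nonneg_left h4 hα.le]
  have h5' : (1-r)*A ≤ β := by
    nlinarith [mul_le_mul_of_nonneg_left h4' hβ.le]
  have hfac : (0:ℝ) < 1 - r := by linarith
  constructor
  · linarith [mul_lt_mul_of_pos_left hrho hfac, mul_le_mul_of_nonneg_left h5' hr0.le,
      mul_le_mul_of_nonneg_left hβE hr0.le, mul_le_mul_of_nonneg_left hBtri hfac.le]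
  · linarith [mul_lt_mul_of_pos_left hrho hfac, mul_le_mul_of_nonneg_left h5 hr0.le,
      mul_le_mul_of_nonneg_left hαB hr0.le, mul_le_mul_of_nonneg_left hEtri hfac.le]

lemma aux_twoB (aa ww B : ℝ) (h0a : 0 ≤ aa) (h1a : aa ≤ 1) (h0w : 0 ≤ ww) (h1w : ww ≤ 1)
    (hB1 : 1 - aa*ww ≤ B) : 1 - aa^2 ≤ 2*B := by nlinarith

/-- **Lemma 3.1.** For `0 < r < 1` there is `C = C(r) > 0` with
`(|a|/C) ρ(z,w) ≤ |1 - (1-āz)/(1-āw)| ≤ C |a| ρ(z,w)` for all `a ∈ D`, `z ∈ ∆(a,r)`,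
`w ∈ D̄`. -/
theorem stmt8 (r : ℝ) (hr0 : 0 < r) (hr1 : r < 1) :
    ∃ C : ℝ, 0 < C ∧
      ∀ a ∈ unitDisk, ∀ z ∈ pDisk a r, ∀ w ∈ Metric.closedBall (0 : ℂ) 1,
        ‖a‖ / C * pseudoDist z w ≤
            ‖1 - (1 - (starRingEnd ℂ) a * z) / (1 - (starRingEnd ℂ) a * w)‖ ∧
        ‖1 - (1 - (starRingEnd ℂ) a * z) / (1 - (starRingEnd ℂ) a * w)‖ ≤
            C * (‖a‖ * pseudoDist z w) := by
  have hr' : (0:ℝ) < 1 - r := by linarith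
  refine ⟨(1+r)/(1-r), div_pos (by linarith) hr', ?_⟩
  intro a ha z hz w hw
  obtain ⟨hz1, hz2⟩ := hz
  have ha1 : ‖a‖ < 1 := by
    simpa [unitDisk] using ha
  have hz1' : ‖z‖ < 1 := by
    simpa [unitDisk] using hz1
  have hw1 : ‖w‖ ≤ 1 := by
    exact mem_closedBall_zero_iff.mp hw
  have hana := norm_nonneg a
  have hznn := norm_nonneg z
  have hwnn := norm_nonneg w
  have hdnn := norm_nonneg (a - z)
  set A := ‖1 - (starRingEnd ℂ) a * z‖ with hAdef
  set B := ‖1 - (starRingEnd ℂ) a * w‖ with hBdef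
  set E := ‖1 - (starRingEnd ℂ) w * z‖ with hEdef
  have hA1 : 1 - ‖a‖ * ‖z‖ ≤ A := by
    have h := aux_one_sub_abs_le ((starRingEnd ℂ) a * z)
    rwa [norm_mul, Complex.norm_conj] at h
  have hB1 : 1 - ‖a‖ * ‖w‖ ≤ B := by
    have h := aux_one_sub_abs_le ((starRingEnd ℂ) a * w)
    rwa [norm_mul, Complex.norm_conj] at h
  have hE1 : 1 - ‖w‖ * ‖z‖ ≤ E := by
    have h := aux_one_sub_abs_le ((starRingEnd ℂ) w * z)
    rwa [norm_mul, Complex.norm_conj] at h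
  have haz1 : ‖a‖ * ‖z‖ < 1 := by
    calc ‖a‖ * ‖z‖ ≤ ‖a‖ * 1 :=
          mul_le_mul_of_nonneg_left hz1'.le hana
      _ < 1 := by simpa using ha1
  have haw1 : ‖a‖ * ‖w‖ < 1 := by
    calc ‖a‖ * ‖w‖ ≤ ‖a‖ * 1 :=
          mul_le_mul_of_nonneg_left hw1 hana
      _ < 1 := by simpa using ha1
  have hwz1 : ‖w‖ * ‖z‖ < 1 := by
    calc ‖w‖ * ‖z‖ ≤ 1 * ‖z‖ :=
          mul_le_mul_of_nonneg_right hw1 hznn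
      _ < 1 := by simpa using hz1'
  have hA : 0 < A := by linarith
  have hB : 0 < B := by linarith
  have hE : 0 < E := by linarith
  -- conjugation identities
  have hconjA : ‖1 - (starRingEnd ℂ) z * a‖ = A := by
    have h : (starRingEnd ℂ) (1 - (starRingEnd ℂ) z * a) = 1 - (starRingEnd ℂ) a * z := by
      rw [map_sub, map_one, map_mul, Complex.conj_conj, mul_comm]
    rw [hAdef, ← h, Complex.norm_conj]
  have hconjB : ‖1 - (starRingEnd ℂ) w * a‖ = B := by
    have h : (starRingEnd ℂ) (1 - (starRingEnd ℂ) w * a) = 1 - (starRingEnd ℂ) a * w := by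
      rw [map_sub, map_one, map_mul, Complex.conj_conj, mul_comm]
    rw [hBdef, ← h, Complex.norm_conj]
  have hconjE : ‖1 - (starRingEnd ℂ) z * w‖ = E := by
    have h : (starRingEnd ℂ) (1 - (starRingEnd ℂ) z * w) = 1 - (starRingEnd ℂ) w * z := by
      rw [map_sub, map_one, map_mul, Complex.conj_conj, mul_comm]
    rw [hEdef, ← h, Complex.norm_conj]
  -- pseudodistance hypothesis
  have hrho : ‖a - z‖ < r * A := by
    have h := hz2
    unfold pseudoDist at h
    rw [norm_div, hconjA] at h
    exact (div_lt_iff₀ hA).mp h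
  -- the fundamental identity
  have hid : A^2 - ‖a - z‖^2
      = (1 - ‖a‖^2)*(1 - ‖z‖^2) := by
    rw [hAdef]; exact aux_id a z
  have hα : 0 < 1 - ‖a‖^2 := by
    have := pow_lt_one₀ hana ha1 two_ne_zero; linarith
  have hβ : 0 < 1 - ‖z‖^2 := by
    have := pow_lt_one₀ hznn hz1' two_ne_zero; linarith
  have hza : ‖z‖ - ‖a‖ ≤ ‖a - z‖ := by
    have h := abs_norm_sub_norm_le z a
    rw [norm_sub_rev z a] at h
    exact (abs_le.mp h).2
  have haz : ‖a‖ - ‖z‖ ≤ ‖a - z‖ := by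
    have h := abs_norm_sub_norm_le a z
    exact le_trans (le_abs_self _) h
  have h3a : 1 - ‖a‖^2 ≤ A + ‖a - z‖ :=
    aux_alpha (‖a‖) (‖z‖) A (‖a - z‖)
      hana ha1.le hA1 hza hdnn
  have h3b : 1 - ‖z‖^2 ≤ A + ‖a - z‖ := by
    have hA1' : 1 - ‖z‖ * ‖a‖ ≤ A := by rwa [mul_comm]
    exact aux_alpha (‖z‖) (‖a‖) A (‖a - z‖)
      hznn hz1'.le hA1' haz hdnn
  have hαB : 1 - ‖a‖^2 ≤ 2*B :=
    aux_twoB _ _ _ hana ha1.le hwnn hw1 hB1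
  have hβE : 1 - ‖z‖^2 ≤ 2*E := by
    have hE1' : 1 - ‖z‖ * ‖w‖ ≤ E := by rwa [mul_comm]
    exact aux_twoB _ _ _ hznn hz1'.le hwnn hw1 hE1'
  -- triangle estimates
  have hEtri : E ≤ B + ‖a - z‖ := by
    have h1 : (1 - (starRingEnd ℂ) w * z)
        = (1 - (starRingEnd ℂ) w * a) + (starRingEnd ℂ) w * (a - z) := by ring
    rw [hEdef, h1]
    refine (norm_add_le _ _).trans ?_
    rw [hconjB, norm_mul, Complex.norm_conj]
    have := mul_le_of_le_one_left hdnn hw1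
    linarith
  have hBtri : B ≤ E + ‖a - z‖ := by
    have h1 : (1 - (starRingEnd ℂ) a * w)
        = (1 - (starRingEnd ℂ) z * w) + ((starRingEnd ℂ) z - (starRingEnd ℂ) a) * w := by ring
    rw [hBdef, h1]
    refine (norm_add_le _ _).trans ?_
    rw [hconjE, norm_mul]
    have h2' : ‖(starRingEnd ℂ) z - (starRingEnd ℂ) a‖ = ‖a - z‖ := by
      rw [← map_sub, Complex.norm_conj, norm_sub_rev]
    rw [h2']
    have := mul_le_of_le_one_right hdnn hw1
    linarith
  obtain ⟨hBE, hEB⟩ := aux_main r A B E (1 - ‖a‖^2) (1 - ‖z‖^2)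
    (‖a - z‖) hr0 hr1 hA hB hE hα hβ hdnn hrho hid h3a h3b hαB hβE hEtri hBtri
  -- rewrite the middle quantity and the pseudodistance
  have hne : (1 - (starRingEnd ℂ) a * w) ≠ 0 := by
    intro h
    have hB0 : B = 0 := by rw [hBdef, h]; simp
    rw [hB0] at hB; exact lt_irrefl 0 hB
  have hmid : ‖1 - (1 - (starRingEnd ℂ) a * z) / (1 - (starRingEnd ℂ) a * w)‖
      = ‖a‖ * ‖z - w‖ / B := by
    have h1 : (1 - (1 - (starRingEnd ℂ) a * z) / (1 - (starRingEnd ℂ) a * w))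
        = (starRingEnd ℂ) a * (z - w) / (1 - (starRingEnd ℂ) a * w) := by
      field_simp
      ring
    rw [h1, norm_div, norm_mul, Complex.norm_conj, hBdef]
  have hpd : pseudoDist z w = ‖z - w‖ / E := by
    unfold pseudoDist
    rw [norm_div, hEdef]
  have hXnn : 0 ≤ ‖a‖ * ‖z - w‖ :=
    mul_nonneg hana (norm_nonneg _)
  rw [hmid, hpd]
  constructor
  · rw [div_mul_div_comm, div_le_div_iff₀ (by positivity) hB]
    have hCE : B ≤ (1+r)/(1-r) * E := by
      rw [div_mul_eq_mul_div, le_div_iff₀ hr']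
      linarith
    exact mul_le_mul_of_nonneg_left hCE hXnn
  · have heq : (1+r)/(1-r) * (‖a‖ * (‖z - w‖ / E))
        = ((1+r)/(1-r) * (‖a‖ * ‖z - w‖)) / E := by ring
    rw [heq, div_le_div_iff₀ hB hE]
    have hEC : E ≤ (1+r)/(1-r) * B := by
      rw [div_mul_eq_mul_div, le_div_iff₀ hr']
      linarith
    linarith [mul_le_mul_of_nonneg_left hEC hXnn]

end
end

section
/- Let μ be a positive Borel measure on the open unit disk D, let 0<r<1 and 0<p,q<∞. Then, as an identity in [0,+∞], lim_{s→1⁻} sup_{a∈D} μ(∆(a,r) ∩ (D\D_s))/(1−|a|²)^{q/p} = limsup_{|a|→1} μ(∆(a,r))/(1−|a|²)^{q/p}, where D_s = {z ∈ D : |z| < s}. -/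
open MeasureTheory Filter Complex Set Metric
open scoped ENNReal

noncomputable section

lemma pseudo_key {a z : ℂ} {r : ℝ} (ha : ‖a‖ < 1) (hz : ‖z‖ < 1)
    (hr0 : 0 < r) (hr1 : r < 1) (h : pseudoDist a z < r) :
    |‖a‖ - ‖z‖| < r * (1 - ‖a‖ * ‖z‖) := by
  set A := ‖a‖ with hA
  set Z := ‖z‖ with hZ
  have hA0 : 0 ≤ A := norm_nonneg a
  have hZ0 : 0 ≤ Z := norm_nonneg z
  have hd : (1 : ℂ) - (starRingEnd ℂ) z * a ≠ 0 := by
    intro hzero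
    have h1 : (starRingEnd ℂ) z * a = 1 := by
      have := sub_eq_zero.mp hzero; exact this.symm
    have h2 : ‖(starRingEnd ℂ) z * a‖ = 1 := by rw [h1, norm_one]
    rw [norm_mul, Complex.norm_conj] at h2
    nlinarith
  have hpos : 0 < ‖1 - (starRingEnd ℂ) z * a‖ := norm_pos_iff.mpr hd
  have h' : ‖a - z‖ < r * ‖1 - (starRingEnd ℂ) z * a‖ := by
    have h0 : ‖a - z‖ / ‖1 - (starRingEnd ℂ) z * a‖ < r := by
      have : pseudoDist a z = ‖a - z‖ / ‖1 - (starRingEnd ℂ) z * a‖ := by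
        rw [pseudoDist, norm_div]
      rwa [this] at h
    exact (div_lt_iff₀ hpos).mp h0
  have h2 : Complex.normSq (a - z) < r ^ 2 * Complex.normSq (1 - (starRingEnd ℂ) z * a) := by
    have e1 := Complex.normSq_eq_norm_sq (a - z)
    have e2 := Complex.normSq_eq_norm_sq (1 - (starRingEnd ℂ) z * a)
    nlinarith [norm_nonneg (a - z)]
  set x : ℝ := (a * (starRingEnd ℂ) z).re with hxdef
  have hxval : x = a.re * z.re + a.im * z.im := by
    simp [hxdef, Complex.mul_re, Complex.conj_re, Complex.conj_im]
  have hx : |x| ≤ A * Z := by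
    calc |x| ≤ ‖a * (starRingEnd ℂ) z‖ := Complex.abs_re_le_norm _
    _ = A * Z := by rw [norm_mul, Complex.norm_conj]
  have hns1 : Complex.normSq (a - z) = A ^ 2 + Z ^ 2 - 2 * x := by
    rw [Complex.normSq_sub, ← Complex.sq_norm, ← Complex.sq_norm]
  have hns2 : Complex.normSq (1 - (starRingEnd ℂ) z * a) = 1 + A ^ 2 * Z ^ 2 - 2 * x := by
    rw [Complex.normSq_sub, Complex.normSq_one, Complex.normSq_mul, Complex.normSq_conj,
      ← Complex.sq_norm, ← Complex.sq_norm]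
    have : ((1 : ℂ) * (starRingEnd ℂ) ((starRingEnd ℂ) z * a)).re = x := by
      simp [hxdef, Complex.mul_re, Complex.conj_re, Complex.conj_im]; ring
    rw [this]; ring
  rw [hns1, hns2] at h2
  have hxle : x ≤ A * Z := le_trans (le_abs_self x) hx
  have hAZ : A * Z < 1 := by nlinarith
  have h4 : (A - Z) ^ 2 < (r * (1 - A * Z)) ^ 2 := by
    nlinarith [mul_nonneg (sub_nonneg.mpr hxle) (by nlinarith : (0:ℝ) ≤ 1 - r ^ 2)]
  have h5 : 0 < r * (1 - A * Z) := by nlinarith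
  exact abs_lt_of_sq_lt_sq h4 (le_of_lt h5)

lemma mem_unitDisk_iff {z : ℂ} : z ∈ unitDisk ↔ ‖z‖ < 1 := by
  rw [unitDisk, mem_ball_zero_iff]

lemma pDisk_lower {a z : ℂ} {r s : ℝ} (hr0 : 0 < r) (hr1 : r < 1) (hs0 : 0 < s) (hs1 : s < 1)
    (ha : ‖a‖ < 1) (hA : s + r ≤ ‖a‖ * (1 + r * s))
    (hz : z ∈ pDisk a r) : s ≤ ‖z‖ := by
  have hz1 : ‖z‖ < 1 := mem_unitDisk_iff.mp hz.1
  have hk := pseudo_key ha hz1 hr0 hr1 hz.2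
  rw [abs_lt] at hk
  have hA0 : 0 ≤ ‖a‖ := norm_nonneg a
  have hZ0 : 0 ≤ ‖z‖ := norm_nonneg z
  have h1ra : r * ‖a‖ < 1 := by nlinarith
  nlinarith [hk.2, h1ra]

lemma pDisk_upper {a z : ℂ} {r t : ℝ} (hr0 : 0 < r) (hr1 : r < 1) (ht0 : 0 ≤ t) (ht1 : t < 1)
    (ha : ‖a‖ < 1) (hat : ‖a‖ ≤ t)
    (hz : z ∈ pDisk a r) : ‖z‖ * (1 + r * t) < t + r := by
  have hz1 : ‖z‖ < 1 := mem_unitDisk_iff.mp hz.1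
  have hk := pseudo_key ha hz1 hr0 hr1 hz.2
  rw [abs_lt] at hk
  have hA0 : 0 ≤ ‖a‖ := norm_nonneg a
  have hZ0 : 0 ≤ ‖z‖ := norm_nonneg z
  nlinarith [hk.1, mul_nonneg (mul_nonneg hr0.le (sub_nonneg.mpr hat)) (sub_nonneg.mpr hz1.le), mul_nonneg (sub_nonneg.mpr hat) (sub_nonneg.mpr hr1.le)]

/-- For a Borel measure `μ` on `D`, `0 < r < 1` and `0 < p, q < ∞`, as an
identity in `[0,∞]`:
`lim_{s→1⁻} sup_{a∈D} μ(∆(a,r)∩(D∖D_s))/(1-|a|²)^{q/p}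
  = limsup_{|a|→1} μ(∆(a,r))/(1-|a|²)^{q/p}`. -/
theorem stmt12 (μ : Measure ℂ) (r p q : ℝ) (hr0 : 0 < r) (hr1 : r < 1)
    (hp : 0 < p) (hq : 0 < q) :
    Filter.Tendsto
      (fun s : ℝ => ⨆ a : unitDisk,
        μ (pDisk (a : ℂ) r ∩ (unitDisk \ Metric.ball (0 : ℂ) s)) /
          ENNReal.ofReal ((1 - ‖(a : ℂ)‖ ^ 2) ^ (q / p)))
      (nhdsWithin 1 (Set.Iio 1))
      (nhds (Filter.limsup
        (fun a : ℂ => μ (pDisk a r) / ENNReal.ofReal ((1 - ‖a‖ ^ 2) ^ (q / p)))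
        bdryFilter)) := by
  refine tendsto_of_le_liminf_of_limsup_le ?_ ?_ (by isBoundedDefault) (by isBoundedDefault)
  · -- L ≤ liminf F
    refine Filter.le_liminf_of_le (by isBoundedDefault) ?_
    filter_upwards [Ioo_mem_nhdsLT_of_mem (show (1:ℝ) ∈ Ioc 0 1 by constructor <;> norm_num)]
      with s hs
    obtain ⟨hs0, hs1⟩ := hs
    have hden : (0:ℝ) < 1 + r * s := by nlinarith
    have ht1 : (s + r) / (1 + r * s) < 1 := by rw [div_lt_one hden]; nlinarith
    refine Filter.limsup_le_of_le (by isBoundedDefault) ?_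
    have hmem : (fun a : ℂ => ‖a‖) ⁻¹' (Ioo ((s + r) / (1 + r * s)) 1) ∈ bdryFilter :=
      Filter.preimage_mem_comap (Ioo_mem_nhdsLT ht1)
    filter_upwards [hmem] with a ha
    have ha1 : ‖a‖ < 1 := ha.2
    have hA : s + r ≤ ‖a‖ * (1 + r * s) := by
      have := (div_lt_iff₀ hden).mp ha.1
      nlinarith
    have hsub : pDisk a r ⊆ unitDisk \ Metric.ball (0:ℂ) s := by
      intro z hz
      refine ⟨hz.1, ?_⟩
      rw [mem_ball_zero_iff, not_lt]
      exact pDisk_lower hr0 hr1 hs0 hs1 ha1 hA hz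
    have heq : pDisk a r ∩ (unitDisk \ Metric.ball (0:ℂ) s) = pDisk a r :=
      inter_eq_left.mpr hsub
    calc μ (pDisk a r) / ENNReal.ofReal ((1 - ‖a‖ ^ 2) ^ (q / p))
        = μ (pDisk a r ∩ (unitDisk \ Metric.ball (0:ℂ) s)) /
            ENNReal.ofReal ((1 - ‖a‖ ^ 2) ^ (q / p)) := by rw [heq]
      _ ≤ _ := le_iSup (fun b : unitDisk =>
            μ (pDisk (b : ℂ) r ∩ (unitDisk \ Metric.ball (0:ℂ) s)) /
              ENNReal.ofReal ((1 - ‖(b : ℂ)‖ ^ 2) ^ (q / p)))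
            ⟨a, mem_unitDisk_iff.mpr ha1⟩
  · -- limsup F ≤ L
    refine le_of_forall_gt_imp_ge_of_dense ?_
    intro c hc
    have hev : ∀ᶠ a in bdryFilter,
        μ (pDisk a r) / ENNReal.ofReal ((1 - ‖a‖ ^ 2) ^ (q / p)) < c :=
      Filter.eventually_lt_of_limsup_lt hc
    obtain ⟨S, hS, hpre⟩ := Filter.mem_comap.mp hev
    obtain ⟨l, hl1, hIoo⟩ := (mem_nhdsLT_iff_exists_Ioo_subset' (show (0:ℝ) < 1 by norm_num)).mp hS
    set t : ℝ := max l 0 with htdef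
    have ht0 : 0 ≤ t := le_max_right l 0
    have ht1 : t < 1 := max_lt hl1 one_pos
    have hglt : ∀ a : ℂ, t < ‖a‖ → ‖a‖ < 1 →
        μ (pDisk a r) / ENNReal.ofReal ((1 - ‖a‖ ^ 2) ^ (q / p)) < c := by
      intro a h1 h2
      exact hpre (hIoo ⟨lt_of_le_of_lt (le_max_left l 0) h1, h2⟩)
    have hden : (0:ℝ) < 1 + r * t := by nlinarith
    have hthr : (t + r) / (1 + r * t) < 1 := by rw [div_lt_one hden]; nlinarith
    refine Filter.limsup_le_of_le (by isBoundedDefault) ?_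
    filter_upwards [Ioo_mem_nhdsLT hthr] with s hs
    refine iSup_le ?_
    rintro ⟨a, haD⟩
    have ha1 : ‖a‖ < 1 := mem_unitDisk_iff.mp haD
    by_cases hcase : t < ‖a‖
    · refine le_trans (ENNReal.div_le_div_right (measure_mono inter_subset_left) _) ?_
      exact (hglt a hcase ha1).le
    · have hempty : pDisk a r ∩ (unitDisk \ Metric.ball (0:ℂ) s) = ∅ := by
        ext z
        simp only [mem_inter_iff, mem_empty_iff_false, iff_false, not_and]
        intro hz hzd
        exfalso
        have h1 := pDisk_upper hr0 hr1 ht0 ht1 ha1 (not_lt.mp hcase) hz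
        have hs' : t + r < s * (1 + r * t) := (div_lt_iff₀ hden).mp hs.1
        have hzs : s ≤ ‖z‖ := by
          have := hzd.2
          rwa [mem_ball_zero_iff, not_lt] at this
        nlinarith
      rw [hempty]
      simp


end
end
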